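/- Let C be a nonempty closed convex subset of a real Hilbert space, f jointly weakly continuous on C × C with f(x,·) convex and subdifferentiable, and (ρ_k) ⊆ [ρ̲, ρ̄] with 0 < ρ̲ ≤ ρ̄. Suppose (x_k) ⊆ C converges weakly to p, y_k = argmin{ ρ_k f(x_k, y) + (1/2)‖y − x_k‖² : y ∈ C }, and ‖x_k − y_k‖ → 0. Then p ∈ Sol(C, f), i.e., f(p, y) ≥ 0 for all y ∈ C. -/

import Mathlib

/-!
Weak limits of sequences in a closed convex set stay in the set (test against `p - P_C p`), so
`p ∈ C`, and `y_k ⇀ p` as well because `‖x_k - y_k‖ → 0`. Comparing `y_k` with the points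
`y_k + t (w - y_k)` of `C` and letting `t → 0⁺` turns the optimality of `y_k` into the variational
inequality `⟪x_k - y_k, w - y_k⟫ ≤ ρ_k (f(x_k, w) - f(x_k, y_k))`. Weakly convergent sequences are
bounded and `ρ_k ≥ ρ̲ > 0`, so the left side divided by `ρ_k` tends to `0`, while by joint weak
continuity `f(x_k, w) - f(x_k, y_k) → f(p, w) - f(p, p) = f(p, w)`.
-/

open RealInnerProductSpace Filter Topology

section

variable {H : Type*} [NormedAddCommGroup H] [InnerProductSpace ℝ H]

def WeakTendsto (x : ℕ → H) (p : H) : Prop :=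
  ∀ v : H, Tendsto (fun k => ⟪x k, v⟫) atTop (𝓝 ⟪p, v⟫)

namespace WeakTendsto

variable {x y : ℕ → H} {p : H}

theorem mem_of_isClosed_of_convex [CompleteSpace H] {C : Set H} (hx : WeakTendsto x p)
    (hxC : ∀ k, x k ∈ C) (hcl : IsClosed C) (hconv : Convex ℝ C) : p ∈ C := by
  obtain ⟨q, hqC, hq⟩ :=
    exists_norm_eq_iInf_of_complete_convex ⟨x 0, hxC 0⟩ hcl.isComplete hconv p
  have hproj := (norm_eq_iInf_iff_real_inner_le_zero hconv hqC).mp hq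
  -- `p - q` separates `p` from `C`, so testing the weak limit against it gives `‖p - q‖² ≤ 0`.
  have hle : ⟪p - q, p - q⟫ ≤ 0 := by
    have hlim : Tendsto (fun k => ⟪x k - q, p - q⟫) atTop (𝓝 ⟪p - q, p - q⟫) := by
      simpa only [inner_sub_left] using (hx (p - q)).sub_const ⟪q, p - q⟫
    refine le_of_tendsto hlim (Eventually.of_forall fun k => ?_)
    rw [real_inner_comm]
    exact hproj (x k) (hxC k)
  rwa [sub_eq_zero.mp (real_inner_self_nonpos.mp hle)]

theorem exists_norm_le [CompleteSpace H] (hx : WeakTendsto x p) : ∃ M, ∀ k, ‖x k‖ ≤ M := by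
  obtain ⟨M, hM⟩ := banach_steinhaus (g := fun k => innerSL ℝ (x k)) fun v =>
    let ⟨c, hc⟩ := (hx v).norm.bddAbove_range
    ⟨c, fun k => hc ⟨k, rfl⟩⟩
  exact ⟨M, fun k => innerSL_apply_norm ℝ (x k) ▸ hM k⟩

theorem of_tendsto_norm_sub (hx : WeakTendsto x p)
    (hxy : Tendsto (fun k => ‖x k - y k‖) atTop (𝓝 0)) : WeakTendsto y p := by
  intro v
  have hsmall : Tendsto (fun k => ⟪x k - y k, v⟫) atTop (𝓝 0) :=
    squeeze_zero_norm (fun k => norm_inner_le_norm _ _) (by simpa using hxy.mul_const ‖v‖)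
  simpa [inner_sub_left] using (hx v).sub hsmall

end WeakTendsto

theorem ConvexOn.inner_sub_le_sub_of_isMinOn {C : Set H} {g : H → ℝ} (hg : ConvexOn ℝ C g)
    {x y w : H} (hy : y ∈ C) (hw : w ∈ C)
    (hmin : IsMinOn (fun z => g z + 1 / 2 * ‖z - x‖ ^ 2) C y) :
    ⟪x - y, w - y⟫ ≤ g w - g y := by
  set a := ⟪x - y, w - y⟫ - (g w - g y)
  set b := ‖w - y‖ ^ 2 / 2
  suffices h : ∀ t : ℝ, 0 < t → t ≤ 1 → a ≤ t * b by
    have hlim : Tendsto (fun t : ℝ => t * b) (𝓝[>] 0) (𝓝 0) :=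
      ((continuous_id.mul_const b).tendsto' 0 0 (zero_mul b)).mono_left nhdsWithin_le_nhds
    exact sub_nonpos.mp <|
      ge_of_tendsto hlim (eventually_of_mem (Ioc_mem_nhdsGT one_pos) fun t ht => h t ht.1 ht.2)
  intro t ht0 ht1
  have hz : (1 - t) • y + t • w ∈ C := hg.1 hy hw (sub_nonneg.2 ht1) ht0.le (sub_add_cancel 1 t)
  have hgz := hg.2 hy hw (sub_nonneg.2 ht1) ht0.le (sub_add_cancel 1 t)
  have hnorm : ‖(1 - t) • y + t • w - x‖ ^ 2 =
      ‖y - x‖ ^ 2 - 2 * t * ⟪x - y, w - y⟫ + t ^ 2 * ‖w - y‖ ^ 2 := by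
    have : (1 - t) • y + t • w - x = (y - x) + t • (w - y) := by
      simp only [smul_sub, sub_smul, one_smul]; abel
    rw [this, norm_add_sq_real, real_inner_smul_right, norm_smul, mul_pow, Real.norm_eq_abs,
      sq_abs, ← neg_sub x y, inner_neg_left]
    ring
  have hopt := isMinOn_iff.mp hmin _ hz
  simp only [smul_eq_mul] at hgz hopt
  have hscaled : t * a ≤ t * (t * b) := by simp only [a, b]; linarith
  exact le_of_mul_le_mul_left hscaled ht0

end

theorem stmt_18_general {H : Type*} [NormedAddCommGroup H] [InnerProductSpace ℝ H] [CompleteSpace H]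
    (C : Set H) (hcl : IsClosed C) (hconv : Convex ℝ C)
    (f : H → H → ℝ) (hf0 : ∀ x ∈ C, f x x = 0)
    (hwc : ∀ x ∈ C, ∀ y ∈ C, ∀ (xk yk : ℕ → H), (∀ k, xk k ∈ C) → (∀ k, yk k ∈ C) →
      (∀ v : H, Tendsto (fun k => ⟪xk k, v⟫) atTop (𝓝 ⟪x, v⟫)) →
      (∀ v : H, Tendsto (fun k => ⟪yk k, v⟫) atTop (𝓝 ⟪y, v⟫)) →
      Tendsto (fun k => f (xk k) (yk k)) atTop (𝓝 (f x y)))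
    (hconvf : ∀ x ∈ C, ConvexOn ℝ C (f x))
    (ρlow ρbar : ℝ) (hρlow : 0 < ρlow)
    (ρ : ℕ → ℝ) (hρ : ∀ k, ρ k ∈ Set.Icc ρlow ρbar)
    (x : ℕ → H) (hxC : ∀ k, x k ∈ C) (p : H)
    (hweak : ∀ v : H, Tendsto (fun k => ⟪x k, v⟫) atTop (𝓝 ⟪p, v⟫))
    (y : ℕ → H) (hyC : ∀ k, y k ∈ C)
    (hymin : ∀ k, ∀ w ∈ C,
      ρ k * f (x k) (y k) + 1 / 2 * ‖y k - x k‖ ^ 2 ≤ ρ k * f (x k) w + 1 / 2 * ‖w - x k‖ ^ 2)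
    (hdiff : Tendsto (fun k => ‖x k - y k‖) atTop (𝓝 0)) :
    ∀ w ∈ C, f p w ≥ 0 := by
  intro w hw
  have hpC : p ∈ C := WeakTendsto.mem_of_isClosed_of_convex hweak hxC hcl hconv
  have hyweak : WeakTendsto y p := WeakTendsto.of_tendsto_norm_sub hweak hdiff
  obtain ⟨M, hM⟩ := hyweak.exists_norm_le
  have hgap : Tendsto (fun k => f (x k) w - f (x k) (y k)) atTop (𝓝 (f p w)) := by
    simpa only [hf0 p hpC, sub_zero] using (hwc p hpC w hw x (fun _ => w) hxC (fun _ => hw) hweak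
      fun _ => tendsto_const_nhds).sub (hwc p hpC p hpC x y hxC hyC hweak hyweak)
  have hvi : ∀ k, (ρ k)⁻¹ * ⟪x k - y k, w - y k⟫ ≤ f (x k) w - f (x k) (y k) := fun k => by
    have hρk : 0 < ρ k := hρlow.trans_le (hρ k).1
    have hprox := ((hconvf (x k) (hxC k)).smul hρk.le).inner_sub_le_sub_of_isMinOn (hyC k) hw
      (isMinOn_iff.2 (hymin k))
    rw [inv_mul_le_iff₀ hρk, mul_sub]
    simpa only [smul_eq_mul] using hprox
  have hinner : Tendsto (fun k => ⟪x k - y k, w - y k⟫) atTop (𝓝 0) :=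
    (tendsto_zero_iff_norm_tendsto_zero.2 hdiff).op_zero_isBoundedUnder_le
      (isBoundedUnder_of ⟨‖w‖ + M, fun k => (norm_sub_le _ _).trans (by linarith [hM k])⟩)
      (fun u v => ⟪u, v⟫) norm_inner_le_norm
  have hρinv : IsBoundedUnder (· ≤ ·) atTop (fun k => ‖(ρ k)⁻¹‖) :=
    isBoundedUnder_of ⟨ρlow⁻¹, fun k => by
      rw [Real.norm_of_nonneg (inv_nonneg.2 (hρlow.le.trans (hρ k).1))]
      exact inv_anti₀ hρlow (hρ k).1⟩
  exact le_of_tendsto_of_tendsto' (isBoundedUnder_le_mul_tendsto_zero hρinv hinner) hgap hvi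

/-- If `x_k ⇀ p`, `y_k` solves the regularized subproblem and `‖x_k − y_k‖ → 0`,
then `p` solves the equilibrium problem. -/
theorem stmt_18 {H : Type*} [NormedAddCommGroup H] [InnerProductSpace ℝ H] [CompleteSpace H]
    (C : Set H) (hne : C.Nonempty) (hcl : IsClosed C) (hconv : Convex ℝ C)
    (f : H → H → ℝ) (hf0 : ∀ x ∈ C, f x x = 0)
    (hwc : ∀ x ∈ C, ∀ y ∈ C, ∀ (xk yk : ℕ → H), (∀ k, xk k ∈ C) → (∀ k, yk k ∈ C) →
      (∀ v : H, Tendsto (fun k => ⟪xk k, v⟫) atTop (𝓝 ⟪x, v⟫)) →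
      (∀ v : H, Tendsto (fun k => ⟪yk k, v⟫) atTop (𝓝 ⟪y, v⟫)) →
      Tendsto (fun k => f (xk k) (yk k)) atTop (𝓝 (f x y)))
    (hconvf : ∀ x ∈ C, ConvexOn ℝ C (f x))
    (hsubdiff : ∀ x ∈ C, ∀ u ∈ C, ∃ w : H, ∀ v ∈ C, f x v ≥ f x u + ⟪w, v - u⟫)
    (ρlow ρbar : ℝ) (hρlow : 0 < ρlow) (hρle : ρlow ≤ ρbar)
    (ρ : ℕ → ℝ) (hρ : ∀ k, ρ k ∈ Set.Icc ρlow ρbar)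
    (x : ℕ → H) (hxC : ∀ k, x k ∈ C) (p : H)
    (hweak : ∀ v : H, Tendsto (fun k => ⟪x k, v⟫) atTop (𝓝 ⟪p, v⟫))
    (y : ℕ → H) (hyC : ∀ k, y k ∈ C)
    (hymin : ∀ k, ∀ w ∈ C,
      ρ k * f (x k) (y k) + 1 / 2 * ‖y k - x k‖ ^ 2 ≤ ρ k * f (x k) w + 1 / 2 * ‖w - x k‖ ^ 2)
    (hdiff : Tendsto (fun k => ‖x k - y k‖) atTop (𝓝 0)) :
    ∀ w ∈ C, f p w ≥ 0 :=
  stmt_18_general C hcl hconv f hf0 hwc hconvf ρlow ρbar hρlow ρ hρ x hxC p hweak y hyC hymin hdiff
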